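/- Let g : (0,1] → ℝ be nonnegative and continuous with ∫₀¹ g(x)² dx < ∞, let α ≥ 1, and let f̂(x) = α·x^(α−1)·∫_x^1 y^(−α)·g(y) dy. If ∫₀¹ f̂(x)² dx < ∞, then ∫₀¹ f̂(x)² dx = (2α/(2α−1)) · ∫₀¹ f̂(x)·g(x) dx. -/

import Mathlib

/-!
Since `f̂ = α x^(α-1) F` with `F x = ∫_x^1 y^(-α) g y`, one has `f̂' = ((α-1) f̂ - α g) / x`,
hence `(x f̂(x)²)' = (2α-1) f̂² - 2α f̂ g` on `(0,1)`. Integrating over `(0,1)` gives the identity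
once the boundary terms vanish: at `1` because `F 1 = 0`, and at `0` because `F` is nonnegative
and antitone, so `ε f̂(ε)² ≤ (2α-1) ∫_0^ε f̂²`, which tends to `0` as `f̂ ∈ L²`.
-/

open MeasureTheory Real Set
open Filter Topology

noncomputable def alphaLEstimate (α : ℝ) (g : ℝ → ℝ) (x : ℝ) : ℝ :=
  α * x ^ (α - 1) * ∫ y in x..1, y ^ (-α) * g y

section Primitive

variable {h : ℝ → ℝ} {a b : ℝ}

theorem continuousOn_integral_left_Ioc (hh : ContinuousOn h (Ioc a b)) :
    ContinuousOn (fun x => ∫ y in x..b, h y) (Ioc a b) := by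
  refine continuousOn_of_locally_continuousOn fun x hx => ⟨Ioi ((a + x) / 2), isOpen_Ioi,
    by simp only [mem_Ioi]; linarith [hx.1], ?_⟩
  have hcb : (a + x) / 2 ≤ b := by linarith [hx.1, hx.2]
  have hint : IntegrableOn h (uIcc ((a + x) / 2) b) volume := by
    rw [uIcc_of_le hcb]
    exact (hh.mono fun y hy => ⟨by linarith [hx.1, hy.1], hy.2⟩).integrableOn_Icc
  have hcont := intervalIntegral.continuousOn_primitive_interval_left hint
  rw [uIcc_of_le hcb] at hcont
  exact hcont.mono fun y hy => ⟨le_of_lt hy.2, hy.1.2⟩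

theorem intervalIntegrable_of_continuousOn_Ioc (hh : ContinuousOn h (Ioc a b)) {x : ℝ}
    (hax : a < x) (hxb : x ≤ b) : IntervalIntegrable h volume x b := by
  refine (hh.mono ?_).intervalIntegrable
  rw [uIcc_of_le hxb]
  exact fun y hy => ⟨hax.trans_le hy.1, hy.2⟩

theorem hasDerivAt_integral_left_of_continuousOn_Ioc (hh : ContinuousOn h (Ioc a b))
    {x : ℝ} (hx : x ∈ Ioo a b) : HasDerivAt (fun u => ∫ y in u..b, h y) (-h x) x :=
  intervalIntegral.integral_hasDerivAt_left
    (intervalIntegrable_of_continuousOn_Ioc hh hx.1 hx.2.le)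
    ((hh.mono Ioo_subset_Ioc_self).stronglyMeasurableAtFilter isOpen_Ioo x hx)
    (hh.continuousAt (Ioc_mem_nhds hx.1 hx.2))

end Primitive

theorem continuousOn_rpow_Ioc (r : ℝ) : ContinuousOn (fun y : ℝ => y ^ r) (Ioc 0 1) :=
  continuousOn_id.rpow_const fun _ hy => Or.inl hy.1.ne'

theorem le_setIntegral_rpow_mul_of_le {p ε c : ℝ} {φ : ℝ → ℝ} (hp : -1 < p) (hε : 0 ≤ ε)
    (hφ : ∀ x ∈ Ioc 0 ε, c ≤ φ x) (hint : IntegrableOn (fun x => x ^ p * φ x) (Ioc 0 ε)) :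
    c * (ε ^ (p + 1) / (p + 1)) ≤ ∫ x in Ioc 0 ε, x ^ p * φ x := by
  have hpow : ∫ x in Ioc 0 ε, c * x ^ p = c * (ε ^ (p + 1) / (p + 1)) := by
    rw [← intervalIntegral.integral_of_le hε, intervalIntegral.integral_const_mul,
      integral_rpow (Or.inl hp), zero_rpow (by linarith), sub_zero]
  rw [← hpow]
  refine setIntegral_mono_on ((intervalIntegral.intervalIntegrable_rpow' hp).1.const_mul c) hint
    measurableSet_Ioc fun x hx => ?_
  rw [mul_comm c]
  exact mul_le_mul_of_nonneg_left (hφ x hx) (rpow_nonneg hx.1.le p)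

section AlphaLEstimate

variable {α : ℝ} {g : ℝ → ℝ}

theorem alphaLEstimate_one : alphaLEstimate α g 1 = 0 := by
  simp [alphaLEstimate]

theorem continuousOn_alphaLEstimate (hg : ContinuousOn g (Ioc 0 1)) :
    ContinuousOn (alphaLEstimate α g) (Ioc 0 1) :=
  (continuousOn_const.mul (continuousOn_rpow_Ioc _)).mul
    (continuousOn_integral_left_Ioc ((continuousOn_rpow_Ioc _).mul hg))

theorem hasDerivAt_alphaLEstimate (hg : ContinuousOn g (Ioc 0 1)) {x : ℝ}
    (hx : x ∈ Ioo 0 1) :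
    HasDerivAt (alphaLEstimate α g) (((α - 1) * alphaLEstimate α g x - α * g x) / x) x := by
  have hx0 : x ≠ 0 := hx.1.ne'
  have hpow := ((hasDerivAt_rpow_const (p := α - 1) (Or.inl hx0)).const_mul α).mul
    (hasDerivAt_integral_left_of_continuousOn_Ioc ((continuousOn_rpow_Ioc (-α)).mul hg) hx)
  have hcancel : x ^ (α - 1) * x ^ (-α) * x = 1 := by
    rw [← rpow_add hx.1, ← rpow_add_one hx0]; ring_nf; exact rpow_zero x
  refine hpow.congr_deriv ?_
  rw [rpow_sub_one hx0 (α - 1), alphaLEstimate]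
  simp only [Pi.mul_apply]
  field_simp
  linear_combination (-(α * g x)) * hcancel

theorem hasDerivAt_mul_alphaLEstimate_sq (hg : ContinuousOn g (Ioc 0 1)) {x : ℝ}
    (hx : x ∈ Ioo 0 1) :
    HasDerivAt (fun x => x * alphaLEstimate α g x ^ 2)
      ((2 * α - 1) * alphaLEstimate α g x ^ 2 - 2 * α * (alphaLEstimate α g x * g x)) x := by
  refine ((hasDerivAt_id x).mul ((hasDerivAt_alphaLEstimate hg hx).pow 2)).congr_deriv ?_
  simp only [Pi.pow_apply, id]
  field_simp [hx.1.ne']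
  ring

theorem mul_alphaLEstimate_sq_le (hα : 1 / 2 < α)
    (hg_nonneg : ∀ x ∈ Ioc (0 : ℝ) 1, 0 ≤ g x) (hg : ContinuousOn g (Ioc 0 1)) {ε : ℝ}
    (hε : ε ∈ Ioc (0 : ℝ) 1)
    (hf : IntegrableOn (fun x => alphaLEstimate α g x ^ 2) (Ioc 0 ε)) :
    ε * alphaLEstimate α g ε ^ 2 ≤ (2 * α - 1) * ∫ x in Ioc 0 ε, alphaLEstimate α g x ^ 2 := by
  set φ : ℝ → ℝ := fun x => α * ∫ y in x..1, y ^ (-α) * g y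
  have hsq : ∀ x > 0, alphaLEstimate α g x ^ 2 = x ^ (2 * α - 2) * φ x ^ 2 := fun x hx => by
    rw [show 2 * α - 2 = (α - 1) + (α - 1) by ring, rpow_add hx, alphaLEstimate]
    ring
  have hφ : ∀ x ∈ Ioc 0 ε, φ ε ^ 2 ≤ φ x ^ 2 := by
    intro x hx
    have hnonneg : ∀ y ∈ Icc x 1, 0 ≤ y ^ (-α) * g y := fun y hy =>
      mul_nonneg (rpow_nonneg (hx.1.trans_le hy.1).le _)
        (hg_nonneg y ⟨hx.1.trans_le hy.1, hy.2⟩)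
    have hint_nonneg : 0 ≤ ∫ y in ε..1, y ^ (-α) * g y :=
      intervalIntegral.integral_nonneg hε.2 fun y hy => hnonneg y ⟨hx.2.trans hy.1, hy.2⟩
    have hint_anti : ∫ y in ε..1, y ^ (-α) * g y ≤ ∫ y in x..1, y ^ (-α) * g y :=
      intervalIntegral.integral_mono_interval hx.2 hε.2 le_rfl
        ((ae_restrict_iff' measurableSet_Ioc).2
          (ae_of_all _ fun y hy => hnonneg y ⟨hy.1.le, hy.2⟩))
        (intervalIntegrable_of_continuousOn_Ioc ((continuousOn_rpow_Ioc (-α)).mul hg) hx.1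
          (hx.2.trans hε.2))
    have hα0 : 0 ≤ α := by linarith
    exact pow_le_pow_left₀ (mul_nonneg hα0 hint_nonneg)
      (mul_le_mul_of_nonneg_left hint_anti hα0) 2
  have hbound := le_setIntegral_rpow_mul_of_le (p := 2 * α - 2) (by linarith) hε.1.le hφ
    (hf.congr_fun (fun x hx => hsq x hx.1) measurableSet_Ioc)
  rw [setIntegral_congr_fun measurableSet_Ioc fun x hx => hsq x hx.1, hsq ε hε.1]
  calc ε * (ε ^ (2 * α - 2) * φ ε ^ 2)
      = (2 * α - 1) * (φ ε ^ 2 * (ε ^ (2 * α - 2 + 1) / (2 * α - 2 + 1))) := by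
        rw [rpow_add_one hε.1.ne', show 2 * α - 2 + 1 = 2 * α - 1 by ring]
        field_simp [show 2 * α - 1 ≠ 0 by linarith]
    _ ≤ _ := mul_le_mul_of_nonneg_left hbound (by linarith)

theorem tendsto_mul_alphaLEstimate_sq_nhdsGT_zero (hα : 1 / 2 < α)
    (hg_nonneg : ∀ x ∈ Ioc (0 : ℝ) 1, 0 ≤ g x) (hg : ContinuousOn g (Ioc 0 1))
    (hf : IntegrableOn (fun x => alphaLEstimate α g x ^ 2) (Ioc 0 1)) :
    Tendsto (fun x => x * alphaLEstimate α g x ^ 2) (𝓝[>] 0) (𝓝 0) := by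
  have hprim :
      Tendsto (fun ε => ∫ x in (0 : ℝ)..ε, alphaLEstimate α g x ^ 2) (𝓝[>] 0) (𝓝 0) := by
    have hint : IntegrableOn (fun x => alphaLEstimate α g x ^ 2) (uIcc 0 1) := by
      rw [uIcc_of_le zero_le_one]
      exact (integrableOn_Icc_iff_integrableOn_Ioc).2 hf
    have hcont := intervalIntegral.continuousOn_primitive_interval hint
    rw [uIcc_of_le zero_le_one] at hcont
    have h0 := hcont 0 ⟨le_rfl, zero_le_one⟩
    rw [ContinuousWithinAt, intervalIntegral.integral_same] at h0
    exact h0.mono_left (nhdsWithin_le_of_mem (mem_of_superset (Ioo_mem_nhdsGT zero_lt_one)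
      Ioo_subset_Icc_self))
  refine squeeze_zero' ?_ ?_ (by simpa using hprim.const_mul (2 * α - 1))
  · filter_upwards [self_mem_nhdsWithin] with x hx using mul_nonneg (le_of_lt hx) (sq_nonneg _)
  · filter_upwards [Ioo_mem_nhdsGT zero_lt_one] with ε hε
    rw [intervalIntegral.integral_of_le hε.1.le]
    exact mul_alphaLEstimate_sq_le hα hg_nonneg hg ⟨hε.1, hε.2.le⟩
      (hf.mono_set (Ioc_subset_Ioc_right hε.2.le))

theorem tendsto_mul_alphaLEstimate_sq_nhdsLT_one (hg : ContinuousOn g (Ioc 0 1)) :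
    Tendsto (fun x => x * alphaLEstimate α g x ^ 2) (𝓝[<] 1) (𝓝 0) := by
  have hcont : ContinuousWithinAt (fun x => x * alphaLEstimate α g x ^ 2) (Ioc 0 1) 1 :=
    (continuousWithinAt_id.mul ((continuousOn_alphaLEstimate hg).pow 2 1 ⟨zero_lt_one, le_rfl⟩))
  simpa [alphaLEstimate_one] using hcont.tendsto.mono_left
    (nhdsWithin_le_of_mem (Ioc_mem_nhdsLT zero_lt_one))

theorem integrableOn_alphaLEstimate_mul (hg : ContinuousOn g (Ioc 0 1))
    (hg_sq : IntegrableOn (fun x => g x ^ 2) (Ioc 0 1))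
    (hf : IntegrableOn (fun x => alphaLEstimate α g x ^ 2) (Ioc 0 1)) :
    IntegrableOn (fun x => alphaLEstimate α g x * g x) (Ioc 0 1) :=
  MemLp.integrable_mul (p := 2) (q := 2)
    ((memLp_two_iff_integrable_sq
      ((continuousOn_alphaLEstimate hg).aestronglyMeasurable measurableSet_Ioc)).2 hf)
    ((memLp_two_iff_integrable_sq (hg.aestronglyMeasurable measurableSet_Ioc)).2 hg_sq)

theorem integral_alphaLEstimate_sq (hα : 1 / 2 < α)
    (hg_nonneg : ∀ x ∈ Ioc (0 : ℝ) 1, 0 ≤ g x) (hg : ContinuousOn g (Ioc 0 1))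
    (hg_sq : IntegrableOn (fun x => g x ^ 2) (Ioc 0 1))
    (hf : IntegrableOn (fun x => alphaLEstimate α g x ^ 2) (Ioc 0 1)) :
    ∫ x in Ioc 0 1, alphaLEstimate α g x ^ 2
      = (2 * α / (2 * α - 1)) * ∫ x in Ioc 0 1, alphaLEstimate α g x * g x := by
  have hfg := integrableOn_alphaLEstimate_mul hg hg_sq hf
  have hftc := intervalIntegral.integral_eq_sub_of_hasDerivAt_of_tendsto zero_lt_one
    (fun x hx => hasDerivAt_mul_alphaLEstimate_sq hg hx)
    ((intervalIntegrable_iff_integrableOn_Ioc_of_le zero_le_one).2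
      ((hf.const_mul (2 * α - 1)).sub (hfg.const_mul (2 * α))))
    (tendsto_mul_alphaLEstimate_sq_nhdsGT_zero hα hg_nonneg hg hf)
    (tendsto_mul_alphaLEstimate_sq_nhdsLT_one hg)
  rw [intervalIntegral.integral_of_le zero_le_one,
    integral_sub (hf.const_mul _) (hfg.const_mul _), integral_const_mul, integral_const_mul,
    sub_zero] at hftc
  field_simp [show 2 * α - 1 ≠ 0 by linarith]
  linarith

end AlphaLEstimate

/-- For nonnegative continuous `g` on `(0,1]` with `∫₀¹ g² < ∞`, `α ≥ 1`,
and `f̂(x) = α x^(α-1) ∫_x^1 y^(-α) g(y) dy`, if `∫₀¹ f̂² < ∞` then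
`∫₀¹ f̂² = (2α/(2α-1)) ∫₀¹ f̂ g`. -/
theorem alphaL_square_cross_identity
    (g : ℝ → ℝ) (α : ℝ) (hα : 1 ≤ α)
    (hg_nonneg : ∀ x ∈ Set.Ioc (0 : ℝ) 1, 0 ≤ g x)
    (hg_cont : ContinuousOn g (Set.Ioc (0 : ℝ) 1))
    (hg_sq : IntegrableOn (fun x => (g x) ^ 2) (Set.Ioc (0 : ℝ) 1))
    (fhat : ℝ → ℝ)
    (hfhat : ∀ x ∈ Set.Ioc (0 : ℝ) 1,
      fhat x = α * x ^ (α - 1) * ∫ y in x..1, y ^ (-α) * g y)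
    (hfhat_sq : IntegrableOn (fun x => (fhat x) ^ 2) (Set.Ioc (0 : ℝ) 1)) :
    ∫ x in Set.Ioc (0 : ℝ) 1, (fhat x) ^ 2
      = (2 * α / (2 * α - 1)) * ∫ x in Set.Ioc (0 : ℝ) 1, fhat x * g x := by
  have hsq : EqOn (fun x => fhat x ^ 2) (fun x => alphaLEstimate α g x ^ 2) (Ioc 0 1) :=
    fun x hx => by simp only [hfhat x hx, alphaLEstimate]
  have hmul : EqOn (fun x => fhat x * g x) (fun x => alphaLEstimate α g x * g x) (Ioc 0 1) :=
    fun x hx => by simp only [hfhat x hx, alphaLEstimate]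
  rw [setIntegral_congr_fun measurableSet_Ioc hsq, setIntegral_congr_fun measurableSet_Ioc hmul]
  exact integral_alphaLEstimate_sq (by linarith) hg_nonneg hg_cont hg_sq
    (hfhat_sq.congr_fun hsq measurableSet_Ioc)
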